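/- Let Z(f) = A₁ + A₂*f + f*A₂ + f*A₃f where A₁ is d×d Hermitian, A₂ is q×d complex, A₃ is q×q Hermitian positive definite, and f ranges over q×d complex matrices. Then Z(f) ≥ A₁ - A₂*A₃⁻¹A₂ for all f (Loewner order), with equality when f = -A₃⁻¹A₂; consequently min_f [Tr(G·Z(f)) + Tr|√G Im Z(f) √G|] over complex f equals Tr(G·J) + Tr|√G Im J √G| where J = A₁ - A₂*A₃⁻¹A₂, for any real positive definite G. -/

import Mathlib

/-!
Completing the square gives `Z f = J + (f + A₃⁻¹A₂)ᴴ A₃ (f + A₃⁻¹A₂) ≥ J`, with equality at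
`f = -A₃⁻¹A₂`, so it suffices that `X ↦ Re Tr(G X) + Tr|s Im X s|` (`s = √G`) is monotone on
Hermitian matrices. For Hermitian `X`, `K X := s (i Im X) s` is Hermitian with `|K X| = |s Im X s|`.
If `P := X - Y ≥ 0`, then `V := |K X| + s (Re P) s` satisfies `V - K Y = (|K X| - K X) + s P s ≥ 0`
and `V + K Y = (|K X| + K X) + s Pᵀ s ≥ 0`, and `-V ≤ H ≤ V` forces `Tr|H| ≤ Tr V` (compare
diagonals in an eigenbasis of `H`). Hence `Tr|K Y| ≤ Tr|K X| + Tr(G Re P)`, and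
`Tr(G Re P) = Re Tr(G P)` because `G` is real.
-/

open Matrix
open scoped ComplexOrder
noncomputable section

/-- Entrywise real part, as a complex matrix. -/
def reM {m n : Type*} (J : Matrix m n ℂ) : Matrix m n ℂ := fun i j => ((J i j).re : ℂ)

/-- Entrywise imaginary part, as a complex matrix. -/
def imM {m n : Type*} (J : Matrix m n ℂ) : Matrix m n ℂ := fun i j => ((J i j).im : ℂ)

/-- A complex matrix has all real entries. -/
def IsRealMat {m n : Type*} (A : Matrix m n ℂ) : Prop := ∀ i j, (A i j).im = 0

/-- The square root of a positive semidefinite matrix, as `Matrix.PosSemidef.sqrt` was defined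
in older Mathlib (since removed). -/
def Matrix.PosSemidef.sqrtOld {n : Type*} [Fintype n] [DecidableEq n] {A : Matrix n n ℂ}
    (hA : A.PosSemidef) : Matrix n n ℂ :=
  (hA.1.eigenvectorUnitary : Matrix n n ℂ) * diagonal ((↑) ∘ (√·) ∘ hA.1.eigenvalues) *
    (star hA.1.eigenvectorUnitary : Matrix n n ℂ)

/-- Matrix absolute value `|A| = √(Aᴴ A)`. -/
def matAbs {n : Type*} [Fintype n] [DecidableEq n] (A : Matrix n n ℂ) : Matrix n n ℂ :=
  (Matrix.posSemidef_conjTranspose_mul_self A).sqrtOld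

open scoped MatrixOrder

namespace Matrix

lemma quadratic_complete_square {m k : Type*} [Fintype m] [DecidableEq m] {A₃ : Matrix m m ℂ}
    (hA₃ : A₃.IsHermitian) (hdet : IsUnit A₃.det) (A₁ : Matrix k k ℂ) (A₂ f : Matrix m k ℂ) :
    A₁ + A₂ᴴ * f + fᴴ * A₂ + fᴴ * A₃ * f =
      A₁ - A₂ᴴ * A₃⁻¹ * A₂ + (f + A₃⁻¹ * A₂)ᴴ * A₃ * (f + A₃⁻¹ * A₂) := by
  rw [conjTranspose_add, conjTranspose_mul, hA₃.inv.eq]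
  simp only [Matrix.add_mul, Matrix.mul_add, Matrix.mul_assoc,
    mul_nonsing_inv_cancel_left _ _ hdet, nonsing_inv_mul_cancel_left _ _ hdet]
  abel

section RealImagParts

variable {m k : Type*}

lemma reM_add_I_smul_imM (W : Matrix m k ℂ) : reM W + Complex.I • imM W = W := by
  ext i j
  simp [reM, imM, Complex.ext_iff]

lemma imM_sub (W₁ W₂ : Matrix m k ℂ) : imM (W₁ - W₂) = imM W₁ - imM W₂ := by
  ext i j
  simp [imM]

lemma IsHermitian.transpose_eq_reM_sub {W : Matrix m m ℂ} (hW : W.IsHermitian) :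
    Wᵀ = reM W - Complex.I • imM W := by
  ext i j
  have hji := congrFun₂ hW i j
  rw [conjTranspose_apply] at hji
  simp [reM, imM, ← hji, Complex.ext_iff]

lemma IsHermitian.isHermitian_I_smul_imM {W : Matrix m m ℂ} (hW : W.IsHermitian) :
    (Complex.I • imM W).IsHermitian := by
  ext i j
  have hji := congrFun₂ hW i j
  rw [conjTranspose_apply] at hji
  simp [imM, ← hji]

lemma re_trace_mul_reM [Fintype m] {G : Matrix m m ℂ} (hG : IsRealMat G) (P : Matrix m m ℂ) :
    (G * reM P).trace.re = (G * P).trace.re := by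
  have hG' : ∀ i j, (G i j).im = 0 := hG
  simp only [trace, diag_apply, mul_apply, Complex.re_sum, Complex.mul_re, reM, hG', zero_mul,
    mul_zero, Complex.ofReal_re, Complex.ofReal_im]

end RealImagParts

variable {n : Type*} [Fintype n] [DecidableEq n]

lemma PosSemidef.sqrtOld_eq_cfcSqrt {A : Matrix n n ℂ} (hA : A.PosSemidef) :
    hA.sqrtOld = CFC.sqrt A := by
  rw [CFC.sqrt_eq_cfc, cfc_nnreal_eq_real _ A hA.nonneg, hA.1.cfc_eq]
  simp only [IsHermitian.cfc, sqrtOld, Unitary.conjStarAlgAut_apply]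
  congr 3
  ext i
  simp [Real.coe_sqrt, Real.coe_toNNReal', hA.eigenvalues_nonneg]

lemma PosSemidef.isHermitian_sqrtOld {A : Matrix n n ℂ} (hA : A.PosSemidef) :
    hA.sqrtOld.IsHermitian := by
  rw [hA.sqrtOld_eq_cfcSqrt]; exact (CFC.sqrt_nonneg A).posSemidef.isHermitian

lemma PosSemidef.sqrtOld_mul_self {A : Matrix n n ℂ} (hA : A.PosSemidef) :
    hA.sqrtOld * hA.sqrtOld = A := by
  rw [hA.sqrtOld_eq_cfcSqrt]; exact CFC.sqrt_mul_sqrt_self A hA.nonneg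

lemma matAbs_eq_cfcAbs (A : Matrix n n ℂ) : matAbs A = CFC.abs A :=
  (posSemidef_conjTranspose_mul_self A).sqrtOld_eq_cfcSqrt

lemma IsHermitian.re_trace_cfcAbs_le {H V : Matrix n n ℂ} (hH : H.IsHermitian)
    (h₁ : (V - H).PosSemidef) (h₂ : (V + H).PosSemidef) :
    (CFC.abs H).trace.re ≤ V.trace.re := by
  let U : Matrix n n ℂ := hH.eigenvectorUnitary
  have hD : star U * H * U = diagonal (Complex.ofReal ∘ hH.eigenvalues) := by
    simpa using hH.conjStarAlgAut_star_eigenvectorUnitary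
  have habs : (CFC.abs H).trace.re = ∑ i, |hH.eigenvalues i| := by
    rw [CFC.abs_eq_cfc_norm H hH.isSelfAdjoint, hH.cfc_eq, IsHermitian.cfc,
      Unitary.conjStarAlgAut_apply, trace_mul_cycle, Unitary.coe_star_mul_self, one_mul,
      trace_diagonal, Complex.re_sum]
    simp
  have hV : (star U * V * U).trace = V.trace := by
    rw [trace_mul_cycle, Unitary.mul_star_self_of_mem hH.eigenvectorUnitary.2, one_mul]
  have hdiag : ∀ i, |hH.eigenvalues i| ≤ ((star U * V * U) i i).re := by
    intro i
    have e₁ := (h₁.conjTranspose_mul_mul_same U).diag_nonneg (i := i)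
    have e₂ := (h₂.conjTranspose_mul_mul_same U).diag_nonneg (i := i)
    rw [← star_eq_conjTranspose, mul_sub, sub_mul, hD] at e₁
    rw [← star_eq_conjTranspose, mul_add, add_mul, hD] at e₂
    simp only [sub_apply, add_apply, diagonal_apply_eq, Function.comp_apply, Complex.nonneg_iff,
      Complex.sub_re, Complex.add_re, Complex.ofReal_re] at e₁ e₂
    exact abs_le.mpr ⟨by linarith [e₂.1], by linarith [e₁.1]⟩
  calc (CFC.abs H).trace.re = ∑ i, |hH.eigenvalues i| := habs
    _ ≤ ∑ i, ((star U * V * U) i i).re := Finset.sum_le_sum fun i _ => hdiag i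
    _ = V.trace.re := by rw [← hV, trace, Complex.re_sum]; rfl

lemma IsHermitian.re_trace_cfcAbs_le_add {H₁ H₂ R : Matrix n n ℂ} (hH₁ : H₁.IsHermitian)
    (hH₂ : H₂.IsHermitian) (h₁ : (R - (H₂ - H₁)).PosSemidef) (h₂ : (R + (H₂ - H₁)).PosSemidef) :
    (CFC.abs H₂).trace.re ≤ (CFC.abs H₁).trace.re + R.trace.re := by
  have habs_sub : (CFC.abs H₁ - H₁).PosSemidef := by
    rw [CFC.abs_sub_self H₁ hH₁.isSelfAdjoint]
    exact (smul_nonneg zero_le_two (CFC.negPart_nonneg H₁)).posSemidef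
  have habs_add : (CFC.abs H₁ + H₁).PosSemidef := by
    rw [CFC.abs_add_self H₁ hH₁.isSelfAdjoint]
    exact (smul_nonneg zero_le_two (CFC.posPart_nonneg H₁)).posSemidef
  have hle := hH₂.re_trace_cfcAbs_le (V := CFC.abs H₁ + R)
    (by convert habs_sub.add h₁ using 1; abel) (by convert habs_add.add h₂ using 1; abel)
  rwa [trace_add, Complex.add_re] at hle

def traceAbsObjective {G : Matrix n n ℂ} (hG : G.PosSemidef) (X : Matrix n n ℂ) : ℝ :=
  (G * X).trace.re + (matAbs (hG.sqrtOld * imM X * hG.sqrtOld)).trace.re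

lemma traceAbsObjective_mono {G X Y : Matrix n n ℂ} (hG : G.PosSemidef) (hGreal : IsRealMat G)
    (hX : X.IsHermitian) (hXY : (X - Y).PosSemidef) :
    traceAbsObjective hG Y ≤ traceAbsObjective hG X := by
  unfold traceAbsObjective
  set s := hG.sqrtOld
  have hs : sᴴ = s := hG.isHermitian_sqrtOld
  let K : Matrix n n ℂ → Matrix n n ℂ := fun W => s * (Complex.I • imM W) * s
  have hK : ∀ {W}, W.IsHermitian → (K W).IsHermitian := fun hW => by
    simpa [K, hs] using isHermitian_mul_mul_conjTranspose s hW.isHermitian_I_smul_imM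
  have hmatAbs : ∀ W, matAbs (s * imM W * s) = CFC.abs (K W) := fun W => by
    simp [K, matAbs_eq_cfcAbs]
  set P := X - Y
  have hY : Y.IsHermitian := by simpa [P] using hX.sub hXY.isHermitian
  have hKP : K Y - K X = -K P := by
    simp only [K, P, imM_sub, smul_sub, mul_sub, sub_mul]; abel
  have hsPs : s * reM P * s - (K Y - K X) = s * P * s := by
    rw [hKP, sub_neg_eq_add]
    simp only [K]
    rw [← add_mul, ← mul_add, reM_add_I_smul_imM]
  have hsPts : s * reM P * s + (K Y - K X) = s * Pᵀ * s := by
    rw [hKP, ← sub_eq_add_neg]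
    simp only [K]
    rw [← sub_mul, ← mul_sub, hXY.isHermitian.transpose_eq_reM_sub]
  have hconj : ∀ {Q : Matrix n n ℂ}, Q.PosSemidef → (s * Q * s).PosSemidef := fun hQ => by
    simpa [hs] using hQ.mul_mul_conjTranspose_same s
  have habs := (hK hX).re_trace_cfcAbs_le_add (hK hY)
    (hsPs ▸ hconj hXY) (hsPts ▸ hconj hXY.transpose)
  have htrace : (s * reM P * s).trace.re = (G * X).trace.re - (G * Y).trace.re := by
    rw [trace_mul_cycle, hG.sqrtOld_mul_self, re_trace_mul_reM hGreal, mul_sub, trace_sub,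
      Complex.sub_re]
  rw [hmatAbs, hmatAbs]
  linarith

end Matrix

/-- For `Z(f) = A₁ + A₂ᴴf + fᴴA₂ + fᴴA₃f` with `A₁` Hermitian, `A₃` positive definite:
`Z(f) ≥ J := A₁ - A₂ᴴA₃⁻¹A₂` for all `f`, with equality at `f = -A₃⁻¹A₂`; hence for any real
positive definite `G`, the minimum over complex `f` of
`Tr(G Z(f)) + Tr|√G Im Z(f) √G|` equals `Tr(G J) + Tr|√G Im J √G|`. -/
theorem complete_square_min {d q : ℕ}
    (A₁ : Matrix (Fin d) (Fin d) ℂ) (A₂ : Matrix (Fin q) (Fin d) ℂ)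
    (A₃ : Matrix (Fin q) (Fin q) ℂ) (h₁ : A₁.IsHermitian) (h₃ : A₃.PosDef)
    (G : Matrix (Fin d) (Fin d) ℂ) (hG : G.PosDef) (hGreal : IsRealMat G) :
    let Z := fun f : Matrix (Fin q) (Fin d) ℂ => A₁ + A₂ᴴ * f + fᴴ * A₂ + fᴴ * A₃ * f
    let J := A₁ - A₂ᴴ * A₃⁻¹ * A₂
    let s := hG.posSemidef.sqrtOld
    (∀ f, (Z f - J).PosSemidef) ∧ Z (-(A₃⁻¹ * A₂)) = J ∧
    IsLeast {x : ℝ | ∃ f, x = (Matrix.trace (G * Z f)).re +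
        (Matrix.trace (matAbs (s * imM (Z f) * s))).re}
      ((Matrix.trace (G * J)).re + (Matrix.trace (matAbs (s * imM J * s))).re) := by
  intro Z J s
  have hZ : ∀ f, Z f = J + (f + A₃⁻¹ * A₂)ᴴ * A₃ * (f + A₃⁻¹ * A₂) :=
    quadratic_complete_square h₃.isHermitian ((isUnit_iff_isUnit_det _).mp h₃.isUnit) A₁ A₂
  have hZJ : ∀ f, (Z f - J).PosSemidef := fun f => by
    rw [hZ f, add_sub_cancel_left]
    exact h₃.posSemidef.conjTranspose_mul_mul_same _
  have hZ₀ : Z (-(A₃⁻¹ * A₂)) = J := by simp [hZ]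
  have hJ : J.IsHermitian := h₁.sub (isHermitian_conjTranspose_mul_mul A₂ h₃.isHermitian.inv)
  refine ⟨hZJ, hZ₀, ⟨_, by rw [hZ₀]⟩, ?_⟩
  rintro _ ⟨f, rfl⟩
  have hZf : (Z f).IsHermitian := by simpa using hJ.add (hZJ f).isHermitian
  exact traceAbsObjective_mono hG.posSemidef hGreal hZf (hZJ f)
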